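/- For a natural number m ≥ 1, there exist natural numbers r and i with i ≥ 1, r + i = m, and the binomial coefficient C(r, i) odd, if and only if m + 1 is not a power of 2. -/

import Mathlib

/-!
Lucas' theorem at the prime 2 gives `C(r, i) ≡ C(r % 2, i % 2) · C(r / 2, i / 2) (mod 2)`.
For even `m = 2M + 2` the split `C(m - 1, 1) = m - 1` is odd. For odd `m = 2M + 1`, an odd
`C(r, i)` with `r + i = m` forces `r` odd and `i` even, so halving identifies the odd splits of `m`
with those of `M`; on the other side, `m + 1 = 2 (M + 1)` is a power of 2 iff `M + 1` is.
Strong induction on `m` finishes.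
-/

namespace Nat

theorem odd_choose_iff_mod_two_le_and_odd_choose_div_two (n k : ℕ) :
    Odd (n.choose k) ↔ k % 2 ≤ n % 2 ∧ Odd ((n / 2).choose (k / 2)) := by
  have hlucas : n.choose k % 2 = ((n % 2).choose (k % 2) * (n / 2).choose (k / 2)) % 2 :=
    haveI : Fact (Nat.Prime 2) := ⟨prime_two⟩
    Choose.choose_modEq_choose_mod_mul_choose_div_nat
  have hdigit : Odd ((n % 2).choose (k % 2)) ↔ k % 2 ≤ n % 2 := by
    rcases mod_two_eq_zero_or_one n with hn | hn <;>
      rcases mod_two_eq_zero_or_one k with hk | hk <;> simp [hn, hk]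
  rw [odd_iff, hlucas, ← odd_iff, odd_mul, hdigit]

theorem exists_two_mul_eq_two_pow_iff (n : ℕ) :
    (∃ t, 2 * n = 2 ^ t) ↔ ∃ t, n = 2 ^ t := by
  constructor
  · rintro ⟨_ | t, ht⟩
    · omega
    · exact ⟨t, by rw [pow_succ'] at ht; omega⟩
  · rintro ⟨t, rfl⟩
    exact ⟨t + 1, (Nat.pow_succ').symm⟩

end Nat

def HasOddChooseSplit (m : ℕ) : Prop :=
  ∃ r i : ℕ, 1 ≤ i ∧ r + i = m ∧ Odd (Nat.choose r i)

theorem not_hasOddChooseSplit_zero : ¬ HasOddChooseSplit 0 := by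
  rintro ⟨r, i, hi, hri, -⟩
  omega

theorem hasOddChooseSplit_two_mul_add_two (M : ℕ) : HasOddChooseSplit (2 * M + 2) :=
  ⟨2 * M + 1, 1, le_rfl, rfl, by simp⟩

theorem hasOddChooseSplit_two_mul_add_one_iff (M : ℕ) :
    HasOddChooseSplit (2 * M + 1) ↔ HasOddChooseSplit M := by
  constructor
  · rintro ⟨r, i, hi, hri, hodd⟩
    rw [Nat.odd_choose_iff_mod_two_le_and_odd_choose_div_two] at hodd
    exact ⟨r / 2, i / 2, by omega, by omega, hodd.2⟩
  · rintro ⟨R, I, hI, hRI, hodd⟩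
    refine ⟨2 * R + 1, 2 * I, by omega, by omega, ?_⟩
    rw [Nat.odd_choose_iff_mod_two_le_and_odd_choose_div_two]
    exact ⟨by omega, by simpa [Nat.mul_add_div] using hodd⟩

theorem stmt4_general (m : ℕ) :
    (∃ r i : ℕ, 1 ≤ i ∧ r + i = m ∧ Odd (Nat.choose r i)) ↔
      ¬ ∃ t : ℕ, m + 1 = 2 ^ t := by
  change HasOddChooseSplit m ↔ _
  induction m using Nat.strong_induction_on with
  | _ m ih =>
  obtain ⟨M, rfl | rfl⟩ := Nat.even_or_odd' m
  · rcases M with _ | M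
    · exact iff_of_false not_hasOddChooseSplit_zero (not_not.2 ⟨0, rfl⟩)
    · refine iff_of_true (hasOddChooseSplit_two_mul_add_two M) ?_
      rintro ⟨_ | t, ht⟩ <;> simp only [pow_zero, pow_succ] at ht <;> omega
  · rw [hasOddChooseSplit_two_mul_add_one_iff, ih M (by omega),
      show 2 * M + 1 + 1 = 2 * (M + 1) by ring, Nat.exists_two_mul_eq_two_pow_iff]

theorem stmt4 (m : ℕ) (hm : 1 ≤ m) :
    (∃ r i : ℕ, 1 ≤ i ∧ r + i = m ∧ Odd (Nat.choose r i)) ↔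
      ¬ ∃ t : ℕ, m + 1 = 2 ^ t :=
  stmt4_general m
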